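/- Let Σ be the covariance matrix of observations y_{1:N} from a dynamic linear model, with Cholesky factor L (Σ = L Lᵀ, L lower triangular, positive diagonal). Then for t' ≥ t, the entries of L are L_{t',t} = Q_t^{1/2} ℓ_{t',t} where ℓ_{t,t} = 1 and, for t' > t, ℓ_{t',t} = F_{t'} (G_{t'} G_{t'−1} ⋯ G_{t+1}) K_t, with Q_t the one-step-ahead predictive variance and K_t = B_t F_tᵀ Q_t⁻¹ the Kalman gain. -/

import Mathlib

open Matrix

/-- Product `G_s G_{s-1} ⋯ G_{t+1}` of transition matrices (empty product = 1). -/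
noncomputable def transProd {q : ℕ} (G : ℕ → Matrix (Fin q) (Fin q) ℝ) (t s : ℕ) :
    Matrix (Fin q) (Fin q) ℝ :=
  ((List.range (s - t)).map (fun i => G (s - i))).prod

/-- Marginal state covariance of the DLM: `S₀ = W₀`, `S_{t+1} = G_{t+1} S_t G_{t+1}ᵀ + W_{t+1}`. -/
noncomputable def stateCov {q : ℕ} (G W : ℕ → Matrix (Fin q) (Fin q) ℝ) : ℕ → Matrix (Fin q) (Fin q) ℝ
  | 0 => W 0
  | t + 1 => G (t + 1) * stateCov G W t * (G (t + 1)).transpose + W (t + 1)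

/-- Covariance of the DLM observations `y_t = F_t θ_t + v_t`:
for `t ≥ t'`, `cov[y_t, y_{t'}] = F_t (G_t ⋯ G_{t'+1}) S_{t'} F_{t'}ᵀ + V_t 1_{t = t'}`. -/
noncomputable def dlmCovEntry {q : ℕ} (F : ℕ → Fin q → ℝ) (G W : ℕ → Matrix (Fin q) (Fin q) ℝ)
    (V : ℕ → ℝ) (t t' : ℕ) : ℝ :=
  F t ⬝ᵥ (transProd G t' t *ᵥ (stateCov G W t' *ᵥ F t')) + (if t = t' then V t else 0)

/-- The covariance matrix `Σ = cov[y_{1:N}]` of the DLM observations. -/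
noncomputable def dlmCov {q : ℕ} (F : ℕ → Fin q → ℝ) (G W : ℕ → Matrix (Fin q) (Fin q) ℝ)
    (V : ℕ → ℝ) (N : ℕ) : Matrix (Fin N) (Fin N) ℝ :=
  Matrix.of fun t t' : Fin N =>
    if (t' : ℕ) ≤ (t : ℕ) then dlmCovEntry F G W V t t' else dlmCovEntry F G W V t' t

/-- One filtering step: `C = B − B Fᵀ Q⁻¹ F B` with `Q = F B Fᵀ + V`. -/
noncomputable def kfStep {q : ℕ} (Fv : Fin q → ℝ) (Vv : ℝ) (B : Matrix (Fin q) (Fin q) ℝ) :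
    Matrix (Fin q) (Fin q) ℝ :=
  B - (Fv ⬝ᵥ (B *ᵥ Fv) + Vv)⁻¹ • Matrix.vecMulVec (B *ᵥ Fv) (Matrix.vecMul Fv B)

/-- Kalman filtering covariance `C_t`, with `B₀ = W₀` and `B_{t+1} = G_{t+1} C_t G_{t+1}ᵀ + W_{t+1}`. -/
noncomputable def kfC {q : ℕ} (F : ℕ → Fin q → ℝ) (G W : ℕ → Matrix (Fin q) (Fin q) ℝ)
    (V : ℕ → ℝ) : ℕ → Matrix (Fin q) (Fin q) ℝ
  | 0 => kfStep (F 0) (V 0) (W 0)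
  | t + 1 => kfStep (F (t + 1)) (V (t + 1))
      (G (t + 1) * kfC F G W V t * (G (t + 1)).transpose + W (t + 1))

/-- One-step-ahead state predictive covariance `B_t = cov[θ_t | y_{1:t-1}]`. -/
noncomputable def kfB {q : ℕ} (F : ℕ → Fin q → ℝ) (G W : ℕ → Matrix (Fin q) (Fin q) ℝ)
    (V : ℕ → ℝ) : ℕ → Matrix (Fin q) (Fin q) ℝ
  | 0 => W 0
  | t + 1 => G (t + 1) * kfC F G W V t * (G (t + 1)).transpose + W (t + 1)

/-- One-step-ahead observation predictive variance `Q_t = F_t B_t F_tᵀ + V_t`. -/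
noncomputable def kfQ {q : ℕ} (F : ℕ → Fin q → ℝ) (G W : ℕ → Matrix (Fin q) (Fin q) ℝ)
    (V : ℕ → ℝ) (t : ℕ) : ℝ :=
  F t ⬝ᵥ (kfB F G W V t *ᵥ F t) + V t

/-- Kalman gain `K_t = B_t F_tᵀ Q_t⁻¹`. -/
noncomputable def kfK {q : ℕ} (F : ℕ → Fin q → ℝ) (G W : ℕ → Matrix (Fin q) (Fin q) ℝ)
    (V : ℕ → ℝ) (t : ℕ) : Fin q → ℝ :=
  (kfQ F G W V t)⁻¹ • (kfB F G W V t *ᵥ F t)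

lemma transProd_self {q : ℕ} (G : ℕ → Matrix (Fin q) (Fin q) ℝ) (t : ℕ) :
    transProd G t t = 1 := by
  simp [transProd]

lemma transProd_succ {q : ℕ} (G : ℕ → Matrix (Fin q) (Fin q) ℝ) {t s : ℕ} (h : t ≤ s) :
    transProd G t (s + 1) = G (s + 1) * transProd G t s := by
  have h1 : s + 1 - t = (s - t) + 1 := by omega
  rw [transProd, h1, List.range_succ_eq_map]
  simp only [List.map_cons, List.map_map, List.prod_cons, Nat.sub_zero]
  congr 1
  · rw [transProd]
    congr 1
    apply List.map_congr_left
    intro i hi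
    simp only [Function.comp_apply]
    have hh : s + 1 - Nat.succ i = s - i := by omega
    rw [hh]

lemma transProd_split {q : ℕ} (G : ℕ → Matrix (Fin q) (Fin q) ℝ) {s t t' : ℕ}
    (h1 : s ≤ t) (h2 : t ≤ t') :
    transProd G s t' = transProd G t t' * transProd G s t := by
  have key : ∀ n, transProd G s (t + n) = transProd G t (t + n) * transProd G s t := by
    intro n
    induction n with
    | zero => simp [transProd]
    | succ n IH =>
      have ht : t ≤ t + n := Nat.le_add_right t n
      rw [show t + (n+1) = (t+n) + 1 by ring, transProd_succ G (le_trans h1 ht),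
        transProd_succ G ht, IH, mul_assoc]
  have : t' = t + (t' - t) := by omega
  rw [this]
  exact key _

lemma kfC_eq {q : ℕ} (F : ℕ → Fin q → ℝ) (G W : ℕ → Matrix (Fin q) (Fin q) ℝ)
    (V : ℕ → ℝ) (t : ℕ) :
    kfC F G W V t = kfStep (F t) (V t) (kfB F G W V t) := by
  cases t <;> rfl

lemma my_vecMulVec_transpose {q : ℕ} (u v : Fin q → ℝ) :
    (Matrix.vecMulVec u v)ᵀ = Matrix.vecMulVec v u := by
  ext i j
  simp [Matrix.vecMulVec, mul_comm]

lemma kfStep_isSymm {q : ℕ} (Fv : Fin q → ℝ) (Vv : ℝ) {B : Matrix (Fin q) (Fin q) ℝ}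
    (hB : B.IsSymm) : (kfStep Fv Vv B).IsSymm := by
  have h1 : Fv ᵥ* B = B *ᵥ Fv := by
    calc Fv ᵥ* B = Fv ᵥ* Bᵀ := by rw [hB]
    _ = B *ᵥ Fv := Matrix.vecMul_transpose B Fv
  unfold kfStep
  rw [Matrix.IsSymm, Matrix.transpose_sub, Matrix.transpose_smul, my_vecMulVec_transpose,
    hB, h1]

lemma kfBC_isSymm {q : ℕ} (F : ℕ → Fin q → ℝ) (G W : ℕ → Matrix (Fin q) (Fin q) ℝ)
    (V : ℕ → ℝ) (hW : ∀ t, (W t).IsSymm) (t : ℕ) :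
    (kfB F G W V t).IsSymm ∧ (kfC F G W V t).IsSymm := by
  induction t with
  | zero =>
    refine ⟨hW 0, ?_⟩
    exact kfStep_isSymm _ _ (hW 0)
  | succ t IH =>
    have hB : (kfB F G W V (t+1)).IsSymm := by
      show (G (t+1) * kfC F G W V t * (G (t+1)).transpose + W (t+1)).IsSymm
      rw [Matrix.IsSymm, Matrix.transpose_add, (hW (t+1)), Matrix.transpose_mul,
        Matrix.transpose_mul, Matrix.transpose_transpose, IH.2, mul_assoc]
    exact ⟨hB, by rw [kfC_eq]; exact kfStep_isSymm _ _ hB⟩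

lemma kfB_sub_kfC {q : ℕ} (F : ℕ → Fin q → ℝ) (G W : ℕ → Matrix (Fin q) (Fin q) ℝ)
    (V : ℕ → ℝ) (hW : ∀ t, (W t).IsSymm) (hQ : ∀ t, 0 < kfQ F G W V t) (t : ℕ) :
    kfB F G W V t - kfC F G W V t
      = kfQ F G W V t • Matrix.vecMulVec (kfK F G W V t) (kfK F G W V t) := by
  have hBsymm := (kfBC_isSymm F G W V hW t).1
  have h1 : F t ᵥ* kfB F G W V t = kfB F G W V t *ᵥ F t := by
    calc F t ᵥ* kfB F G W V t = F t ᵥ* (kfB F G W V t)ᵀ := by rw [hBsymm]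
    _ = kfB F G W V t *ᵥ F t := Matrix.vecMul_transpose _ _
  have hQt := (hQ t).ne'
  rw [kfC_eq]
  unfold kfStep
  rw [sub_sub_cancel, h1]
  have hq : F t ⬝ᵥ kfB F G W V t *ᵥ F t + V t = kfQ F G W V t := rfl
  rw [hq]
  ext i j
  simp only [Matrix.smul_apply, Matrix.vecMulVec_apply, kfK, Pi.smul_apply, smul_eq_mul]
  field_simp

lemma stateCov_eq {q : ℕ} (F : ℕ → Fin q → ℝ) (G W : ℕ → Matrix (Fin q) (Fin q) ℝ)
    (V : ℕ → ℝ) (t : ℕ) :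
    stateCov G W t = kfB F G W V t + ∑ s ∈ Finset.range t,
      transProd G s t * (kfB F G W V s - kfC F G W V s) * (transProd G s t)ᵀ := by
  induction t with
  | zero => simp [stateCov, kfB]
  | succ t IH =>
    set D : ℕ → Matrix (Fin q) (Fin q) ℝ := fun s => kfB F G W V s - kfC F G W V s with hD
    have hsum : ∑ s ∈ Finset.range (t+1), transProd G s (t+1) * D s * (transProd G s (t+1))ᵀ
        = G (t+1) * D t * (G (t+1))ᵀ
          + G (t+1) * (∑ s ∈ Finset.range t,
              transProd G s t * D s * (transProd G s t)ᵀ) * (G (t+1))ᵀ := by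
      rw [Finset.sum_range_succ]
      have h1 : ∀ s ∈ Finset.range t, transProd G s (t+1) * D s * (transProd G s (t+1))ᵀ
          = G (t+1) * (transProd G s t * D s * (transProd G s t)ᵀ * (G (t+1))ᵀ) := by
        intro s hs
        have hst : s ≤ t := le_of_lt (Finset.mem_range.mp hs)
        rw [transProd_succ G hst, Matrix.transpose_mul]
        noncomm_ring
      rw [Finset.sum_congr rfl h1, transProd_succ G (le_refl t), transProd_self,
        ← Finset.mul_sum, ← Finset.sum_mul, mul_one]
      rw [mul_assoc (G (t+1)), add_comm]
      simp only [mul_assoc]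
    show G (t+1) * stateCov G W t * (G (t+1))ᵀ + W (t+1) = _
    rw [IH, hsum]
    have hB1 : kfB F G W V (t+1)
        = G (t+1) * kfC F G W V t * (G (t+1))ᵀ + W (t+1) := rfl
    rw [hB1, hD]
    noncomm_ring

lemma my_vecMulVec_mulVec {q : ℕ} (u v x : Fin q → ℝ) :
    Matrix.vecMulVec u v *ᵥ x = (v ⬝ᵥ x) • u := by
  ext i
  simp only [Matrix.mulVec, Matrix.vecMulVec_apply, dotProduct, Pi.smul_apply, smul_eq_mul,
    Finset.sum_mul]
  apply Finset.sum_congr rfl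
  intro j _
  ring

lemma my_sum_mulVec {q : ℕ} (s : Finset ℕ) (A : ℕ → Matrix (Fin q) (Fin q) ℝ) (v : Fin q → ℝ) :
    (∑ i ∈ s, A i) *ᵥ v = ∑ i ∈ s, A i *ᵥ v := by
  ext i
  simp only [Matrix.mulVec, dotProduct, Finset.sum_apply, Matrix.sum_apply, Finset.sum_mul]
  exact Finset.sum_comm

lemma scalar_key {q : ℕ} (u w k : Fin q → ℝ) (Φ : Matrix (Fin q) (Fin q) ℝ) (c : ℝ) :
    u ⬝ᵥ ((Φ * (c • Matrix.vecMulVec k k) * Φᵀ) *ᵥ w)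
      = c * ((u ⬝ᵥ (Φ *ᵥ k)) * (w ⬝ᵥ (Φ *ᵥ k))) := by
  have hd : k ⬝ᵥ (Φᵀ *ᵥ w) = w ⬝ᵥ (Φ *ᵥ k) := by
    rw [Matrix.mulVec_transpose, Matrix.dotProduct_mulVec, dotProduct_comm]
  rw [← Matrix.mulVec_mulVec, ← Matrix.mulVec_mulVec, Matrix.smul_mulVec,
    my_vecMulVec_mulVec, hd]
  rw [Matrix.mulVec_smul, Matrix.mulVec_smul, dotProduct_smul, dotProduct_smul,
    smul_eq_mul, smul_eq_mul]
  ring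

lemma my_dotProduct_sum {q : ℕ} (u : Fin q → ℝ) (s : Finset ℕ) (w : ℕ → Fin q → ℝ) :
    u ⬝ᵥ (∑ i ∈ s, w i) = ∑ i ∈ s, u ⬝ᵥ w i := by
  simp only [dotProduct, Finset.sum_apply, Finset.mul_sum]
  exact Finset.sum_comm

noncomputable def cholEntry {q : ℕ} (F : ℕ → Fin q → ℝ) (G W : ℕ → Matrix (Fin q) (Fin q) ℝ)
    (V : ℕ → ℝ) (m s : ℕ) : ℝ :=
  if s ≤ m then Real.sqrt (kfQ F G W V s) *
    (if s = m then 1 else F m ⬝ᵥ (transProd G s m *ᵥ kfK F G W V s)) else 0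

lemma cholEntry_sum {q : ℕ} (F : ℕ → Fin q → ℝ) (G W : ℕ → Matrix (Fin q) (Fin q) ℝ)
    (V : ℕ → ℝ) (hW : ∀ t, (W t).IsSymm) (hQ : ∀ t, 0 < kfQ F G W V t)
    {N n n' : ℕ} (h : n ≤ n') (h' : n' < N) :
    ∑ s ∈ Finset.range N, cholEntry F G W V n' s * cholEntry F G W V n s
      = dlmCovEntry F G W V n' n := by
  have hNn : n + 1 ≤ N := by omega
  have hzero : ∀ x ∈ Finset.range N, x ∉ Finset.range (n+1) →
      cholEntry F G W V n' x * cholEntry F G W V n x = 0 := by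
    intro x _ hx
    have : ¬ x ≤ n := by simpa [Finset.mem_range] using hx
    simp only [cholEntry]
    rw [if_neg this, mul_zero]
  rw [← Finset.sum_subset (Finset.range_subset_range.mpr hNn) hzero, Finset.sum_range_succ]
  set u := F n' ᵥ* transProd G n n' with hu_def
  have hu : ∀ z, F n' ⬝ᵥ (transProd G n n' *ᵥ z) = u ⬝ᵥ z :=
    fun z => Matrix.dotProduct_mulVec _ _ _
  have hsq : ∀ s, Real.sqrt (kfQ F G W V s) * Real.sqrt (kfQ F G W V s) = kfQ F G W V s :=
    fun s => Real.mul_self_sqrt (le_of_lt (hQ s))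
  have hterm : ∀ s ∈ Finset.range n, cholEntry F G W V n' s * cholEntry F G W V n s
      = u ⬝ᵥ ((transProd G s n * (kfB F G W V s - kfC F G W V s) * (transProd G s n)ᵀ)
          *ᵥ F n) := by
    intro s hs
    have hsn : s < n := Finset.mem_range.mp hs
    rw [cholEntry, if_pos (by omega : s ≤ n'), if_neg (by omega : ¬ s = n'),
      cholEntry, if_pos (by omega : s ≤ n), if_neg (by omega : ¬ s = n)]
    rw [kfB_sub_kfC F G W V hW hQ s, scalar_key,
      transProd_split G (le_of_lt hsn) h, ← Matrix.mulVec_mulVec, hu]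
    have key : ∀ a X Y : ℝ, 0 ≤ a → (Real.sqrt a * X) * (Real.sqrt a * Y) = a * (X * Y) := by
      intro a X Y ha
      rw [show (Real.sqrt a * X) * (Real.sqrt a * Y) = (Real.sqrt a * Real.sqrt a) * (X * Y)
        from by ring, Real.mul_self_sqrt ha]
    exact key _ _ _ (le_of_lt (hQ s))
  rw [Finset.sum_congr rfl hterm, ← my_dotProduct_sum, ← my_sum_mulVec]
  have hS : ∑ s ∈ Finset.range n,
      transProd G s n * (kfB F G W V s - kfC F G W V s) * (transProd G s n)ᵀ
      = stateCov G W n - kfB F G W V n := by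
    rw [stateCov_eq F G W V n]; abel
  rw [hS]
  have hQn : kfQ F G W V n = F n ⬝ᵥ (kfB F G W V n *ᵥ F n) + V n := rfl
  have hc1 : cholEntry F G W V n n = Real.sqrt (kfQ F G W V n) := by
    rw [cholEntry, if_pos (le_refl n), if_pos rfl, mul_one]
  have hc2 : cholEntry F G W V n' n = Real.sqrt (kfQ F G W V n) *
      (if n = n' then 1 else F n' ⬝ᵥ (transProd G n n' *ᵥ kfK F G W V n)) := by
    rw [cholEntry, if_pos h]
  rw [hc1, hc2]
  by_cases hc : n = n'
  · subst hc
    rw [if_pos rfl]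
    have hu1 : u = F n := by rw [hu_def, transProd_self, Matrix.vecMul_one]
    rw [hu1, dlmCovEntry, transProd_self, Matrix.one_mulVec, if_pos rfl,
      Matrix.sub_mulVec, dotProduct_sub, mul_one, hsq n, hQn]
    ring
  · have key1 : ∀ a X : ℝ, 0 ≤ a → (Real.sqrt a * X) * Real.sqrt a = a * X := by
      intro a X ha
      rw [show (Real.sqrt a * X) * Real.sqrt a = (Real.sqrt a * Real.sqrt a) * X from by ring,
        Real.mul_self_sqrt ha]
    have hK : kfQ F G W V n • kfK F G W V n = kfB F G W V n *ᵥ F n := by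
      rw [kfK, smul_smul, mul_inv_cancel₀ (hQ n).ne', one_smul]
    have e1 : (Real.sqrt (kfQ F G W V n) *
          (F n' ⬝ᵥ (transProd G n n' *ᵥ kfK F G W V n))) * Real.sqrt (kfQ F G W V n)
        = u ⬝ᵥ (kfB F G W V n *ᵥ F n) := by
      rw [hu, key1 _ _ (hQ n).le, ← hK, dotProduct_smul, smul_eq_mul]
    rw [if_neg hc, e1, dlmCovEntry, hu, if_neg (fun hh => hc hh.symm), add_zero,
      Matrix.sub_mulVec, dotProduct_sub]
    ring

lemma chol_unique {N : ℕ} (A B : Matrix (Fin N) (Fin N) ℝ)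
    (hAlow : ∀ r c : Fin N, (r:ℕ) < (c:ℕ) → A r c = 0)
    (hBlow : ∀ r c : Fin N, (r:ℕ) < (c:ℕ) → B r c = 0)
    (hAdiag : ∀ i, 0 < A i i) (hBdiag : ∀ i, 0 < B i i)
    (h : A * A.transpose = B * B.transpose) : A = B := by
  have key : ∀ n : ℕ, ∀ c : Fin N, (c:ℕ) = n → ∀ r, A r c = B r c := by
    intro n
    induction n using Nat.strong_induction_on with
    | _ n IH =>
      intro c hc
      have hent : ∀ r : Fin N, A r c * A c c = B r c * B c c := by
        intro r
        have h0 : ∑ j : Fin N, A r j * A c j = ∑ j : Fin N, B r j * B c j := by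
          have := congrFun (congrFun h r) c
          simpa only [Matrix.mul_apply, Matrix.transpose_apply] using this
        have hrest : ∀ j ∈ Finset.univ.erase c,
            A r j * A c j = B r j * B c j := by
          intro j hj
          have hjc : (j:ℕ) ≠ (c:ℕ) := fun hh =>
            (Finset.ne_of_mem_erase hj) (Fin.ext hh)
          rcases hjc.lt_or_gt with hlt | hgt
          · have e1 := IH ↑j (hc ▸ hlt) j rfl r
            have e2 := IH ↑j (hc ▸ hlt) j rfl c
            rw [e1, e2]
          · rw [hAlow c j hgt, hBlow c j hgt, mul_zero, mul_zero]
        have hsA := Finset.sum_erase_add Finset.univ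
          (fun j => A r j * A c j) (Finset.mem_univ c)
        have hsB := Finset.sum_erase_add Finset.univ
          (fun j => B r j * B c j) (Finset.mem_univ c)
        have hse := Finset.sum_congr rfl hrest
        rw [← hsA, ← hsB, hse] at h0
        linarith
      have hdg : A c c = B c c := by
        have h2 := hent c
        nlinarith [hAdiag c, hBdiag c]
      intro r
      have h3 := hent r
      rw [hdg] at h3
      exact mul_right_cancel₀ (hBdiag c).ne' h3
  ext r c
  exact key ↑c c rfl r

noncomputable def Mcand {N q : ℕ} (F : ℕ → Fin q → ℝ) (G W : ℕ → Matrix (Fin q) (Fin q) ℝ)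
    (V : ℕ → ℝ) : Matrix (Fin N) (Fin N) ℝ :=
  Matrix.of fun t' t : Fin N => cholEntry F G W V t' t

lemma Mcand_mul {N q : ℕ} (F : ℕ → Fin q → ℝ) (G W : ℕ → Matrix (Fin q) (Fin q) ℝ)
    (V : ℕ → ℝ) (hW : ∀ t, (W t).IsSymm) (hQ : ∀ t, 0 < kfQ F G W V t) :
    Mcand (N := N) F G W V * (Mcand (N := N) F G W V).transpose = dlmCov F G W V N := by
  ext t t'
  rw [Matrix.mul_apply]
  simp only [Matrix.transpose_apply, Mcand, Matrix.of_apply, dlmCov]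
  rcases le_or_gt (t':ℕ) (t:ℕ) with hle | hlt
  · rw [if_pos hle]
    rw [Fin.sum_univ_eq_sum_range (fun j => cholEntry F G W V ↑t j * cholEntry F G W V ↑t' j) N]
    exact cholEntry_sum F G W V hW hQ hle t.isLt
  · rw [if_neg (not_le.mpr hlt)]
    have : ∀ j : Fin N, cholEntry F G W V ↑t ↑j * cholEntry F G W V ↑t' ↑j
        = cholEntry F G W V ↑t' ↑j * cholEntry F G W V ↑t ↑j := fun j => mul_comm _ _
    rw [Finset.sum_congr rfl (fun j _ => this j)]
    rw [Fin.sum_univ_eq_sum_range (fun j => cholEntry F G W V ↑t' j * cholEntry F G W V ↑t j) N]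
    exact cholEntry_sum F G W V hW hQ (le_of_lt hlt) t'.isLt

/-- Lemma 3 of the paper (Cholesky factor from the inverse Kalman filter): if `L` is the
lower-triangular Cholesky factor (positive diagonal) of the DLM observation covariance `Σ`,
then for `t' ≥ t`, `L_{t',t} = Q_t^{1/2} ℓ_{t',t}` with `ℓ_{t,t} = 1` and
`ℓ_{t',t} = F_{t'} (G_{t'} ⋯ G_{t+1}) K_t` for `t' > t`. -/
theorem cholesky_from_kalman_filter {N q : ℕ}
    (F : ℕ → Fin q → ℝ) (G W : ℕ → Matrix (Fin q) (Fin q) ℝ) (V : ℕ → ℝ)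
    (hW : ∀ t, (W t).PosSemidef) (hV : ∀ t, 0 ≤ V t)
    (hQ : ∀ t, 0 < kfQ F G W V t)
    (L : Matrix (Fin N) (Fin N) ℝ)
    (hLlow : ∀ t' t : Fin N, (t' : ℕ) < (t : ℕ) → L t' t = 0)
    (hLdiag : ∀ t : Fin N, 0 < L t t)
    (hChol : L * L.transpose = dlmCov F G W V N) :
    ∀ t' t : Fin N, (t : ℕ) ≤ (t' : ℕ) →
      L t' t = Real.sqrt (kfQ F G W V t) *
        (if (t : ℕ) = (t' : ℕ) then 1
         else F t' ⬝ᵥ (transProd G t t' *ᵥ kfK F G W V t)) := by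
  have hWsymm : ∀ t, (W t).IsSymm := by
    intro t
    have := (hW t).1
    rwa [Matrix.IsHermitian, Matrix.conjTranspose_eq_transpose_of_trivial] at this
  have hMlow : ∀ r c : Fin N, (r:ℕ) < (c:ℕ) → Mcand F G W V r c = 0 := by
    intro r c hrc
    simp only [Mcand, Matrix.of_apply, cholEntry]
    rw [if_neg (by omega)]
  have hMdiag : ∀ i : Fin N, 0 < Mcand F G W V i i := by
    intro i
    have he : Mcand F G W V i i = Real.sqrt (kfQ F G W V ↑i) := by
      simp [Mcand, cholEntry]
    rw [he]
    exact Real.sqrt_pos.mpr (hQ _)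
  have hLM : L = Mcand F G W V := by
    apply chol_unique L (Mcand F G W V) hLlow hMlow hLdiag hMdiag
    rw [hChol, Mcand_mul F G W V hWsymm hQ]
  intro t' t h
  rw [hLM]
  simp only [Mcand, Matrix.of_apply, cholEntry]
  rw [if_pos h]
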